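/- Let E = ((N_t, q_t))_{t∈[m]} be a request sequence that has no inactive edges under the water-filling allocation, and let (h_t)_{t∈[m]} be the water-filling heights of its online nodes. Then the neighbors of each offline node appear in order of strictly increasing height: for every offline node i and all t, s with i ∈ N_t, i ∈ N_s, and t < s, we have h_t < h_s. -/

import Mathlib

open Finset MeasureTheory

/-- A request sequence with `n` offline nodes and `m` online nodes: each online
node `t` has a nonempty neighborhood `N t ⊆ [n]` and a positive quantity `q t`. -/
structure ReqSeq (n m : ℕ) where
  N : Fin m → Finset (Fin n)
  q : Fin m → ℝ
  N_nonempty : ∀ t, (N t).Nonempty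
  q_pos : ∀ t, 0 < q t

/-- `Δ(N, q)`: feasible allocations for a single online node. -/
def allocSet (n : ℕ) (N : Finset (Fin n)) (qt : ℝ) : Set (Fin n → ℝ) :=
  {x | (∀ i, 0 ≤ x i) ∧ (∀ i, i ∉ N → x i = 0) ∧ ∑ i, x i = qt}

/-- A feasible allocation trajectory on a request sequence. -/
def Feasible {n m : ℕ} (E : ReqSeq n m) (x : Fin m → Fin n → ℝ) : Prop :=
  ∀ t, x t ∈ allocSet n (E.N t) (E.q t)

/-- `Δ(E)`: the Minkowski sum of the per-node allocation sets (feasible load vectors). -/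
def loads {n m : ℕ} (E : ReqSeq n m) : Set (Fin n → ℝ) :=
  {ℓ | ∃ x, Feasible E x ∧ ℓ = ∑ t, x t}

/-- Sum of the `k` largest entries of `x`. -/
noncomputable def topSum {n : ℕ} (x : Fin n → ℝ) (k : ℕ) : ℝ :=
  sSup ((fun s : Finset (Fin n) => ∑ i ∈ s, x i) '' {s | s.card = k})

/-- `Majorizes x y` means `x ⪰ y`: equal total sums and every `k`-largest-entries
sum of `x` dominates that of `y`. -/
def Majorizes {n : ℕ} (x y : Fin n → ℝ) : Prop :=
  (∑ i, x i = ∑ i, y i) ∧ ∀ k ≤ n, topSum y k ≤ topSum x k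

/-- `f` is Schur-concave on the nonnegative orthant: `x ⪯ y → f x ≥ f y`. -/
def SchurConcave {n : ℕ} (f : (Fin n → ℝ) → ℝ) : Prop :=
  ∀ x y : Fin n → ℝ, (∀ i, 0 ≤ x i) → (∀ i, 0 ≤ y i) → Majorizes y x → f y ≤ f x

/-- `g` is Schur-convex on the nonnegative orthant: `x ⪯ y → g x ≤ g y`. -/
def SchurConvex {n : ℕ} (g : (Fin n → ℝ) → ℝ) : Prop :=
  ∀ x y : Fin n → ℝ, (∀ i, 0 ≤ x i) → (∀ i, 0 ≤ y i) → Majorizes y x → g x ≤ g y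

/-- Cumulative load strictly before online node `t`. -/
def prevLoad {n m : ℕ} (x : Fin m → Fin n → ℝ) (t : Fin m) : Fin n → ℝ :=
  fun i => ∑ s ∈ Finset.univ.filter (fun s => s < t), x s i

/-- Minimum of `v` over the neighborhood of online node `t`. -/
noncomputable def nbhdMinOn {n m : ℕ} (E : ReqSeq n m) (t : Fin m) (v : Fin n → ℝ) : ℝ :=
  (E.N t).inf' (E.N_nonempty t) v

/-- `x` is the water-filling allocation trajectory on `E`: at each arrival `t`,
`x t` maximizes the minimum post-allocation load over `N t`. -/
def IsWFAlloc {n m : ℕ} (E : ReqSeq n m) (x : Fin m → Fin n → ℝ) : Prop :=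
  Feasible E x ∧
  ∀ t, ∀ y ∈ allocSet n (E.N t) (E.q t),
    nbhdMinOn E t (fun i => y i + prevLoad x t i) ≤ nbhdMinOn E t (fun i => x t i + prevLoad x t i)

-- The load vector produced by water-filling (via choice; the trajectory exists and is unique).
open Classical in
noncomputable def wfLoad {n m : ℕ} (E : ReqSeq n m) : Fin n → ℝ :=
  if h : ∃ x, IsWFAlloc E x then ∑ t, h.choose t else 0

/-- `ℓ` is the majorization-minimal element of `Δ(E)`. -/
def IsOpt {n m : ℕ} (E : ReqSeq n m) (ℓ : Fin n → ℝ) : Prop :=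
  ℓ ∈ loads E ∧ ∀ ℓ' ∈ loads E, Majorizes ℓ' ℓ

-- `OPT(E)`, the majorization-minimal feasible load vector (via choice).
open Classical in
noncomputable def optLoad {n m : ℕ} (E : ReqSeq n m) : Fin n → ℝ :=
  if h : ∃ ℓ, IsOpt E ℓ then h.choose else 0

/-- A request sequence is nested if `N 1 ⊇ N 2 ⊇ ⋯ ⊇ N m`. -/
def IsNested {n m : ℕ} (E : ReqSeq n m) : Prop :=
  ∀ s t : Fin m, s ≤ t → E.N t ⊆ E.N s

/-- `E_{n,m,q}`: request sequences with total quantity `q`. -/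
def seqs (n m : ℕ) (q : ℝ) : Set (ReqSeq n m) := {E | ∑ t, E.q t = q}

/-- The harmonic-series matrix applied to a vector: `(Hℓ)(i) = Σ_{j ≤ i} ℓ(j)/(n − j + 1)`
(in 1-indexed notation). -/
noncomputable def Hvec (n : ℕ) (ℓ : Fin n → ℝ) : Fin n → ℝ :=
  fun i => ∑ j ∈ Finset.univ.filter (fun j => j ≤ i), ℓ j / ((n - (j : ℕ) : ℕ) : ℝ)

/-- The water-filling height of online node `t`: the common post-allocation load of
the offline nodes in the support of `x t`. -/
noncomputable def height {n m : ℕ} (x : Fin m → Fin n → ℝ) (t : Fin m) : ℝ :=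
  sSup {c | ∃ i, 0 < x t i ∧ c = x t i + prevLoad x t i}

/-!
Water-filling only stops raising the minimum post-allocation load over `N t` once every
offline node that received water sits exactly at that minimum: otherwise moving a little
water from a node above the minimum to the rest of `N t` would raise the minimum. So the
height of `t` is the post-allocation load of any node it actually fills. If `i` is filled by
both `t < s`, its load after `t` is at most its load before `s`, and `s` adds a positive amount.
-/

section Transfer

variable {ι : Type*} [DecidableEq ι]

noncomputable def transfer (N : Finset ι) (i : ι) (ε : ℝ) : ι → ℝ :=
  fun j => if j = i then -ε else if j ∈ N then ε / #(N.erase i) else 0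

lemma transfer_eq_zero_of_notMem {N : Finset ι} {i j : ι} (hi : i ∈ N) (hj : j ∉ N) (ε : ℝ) :
    transfer N i ε j = 0 := by
  have hji : j ≠ i := by rintro rfl; exact hj hi
  simp [transfer, hji, hj]

lemma sum_transfer [Fintype ι] {N : Finset ι} {i : ι} (hi : i ∈ N) (hN : (N.erase i).Nonempty)
    (ε : ℝ) : ∑ j, transfer N i ε j = 0 := by
  rw [← Finset.sum_subset (Finset.subset_univ N) fun j _ hj => transfer_eq_zero_of_notMem hi hj ε,
    ← Finset.add_sum_erase N _ hi]
  have hshare : ∀ j ∈ N.erase i, transfer N i ε j = ε / #(N.erase i) := fun j hj => by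
    simp [transfer, Finset.ne_of_mem_erase hj, Finset.mem_of_mem_erase hj]
  rw [Finset.sum_congr rfl hshare, Finset.sum_const, nsmul_eq_mul,
    mul_div_cancel₀ _ (Nat.cast_ne_zero.mpr hN.card_pos.ne')]
  simp [transfer]

lemma inf'_lt_inf'_add_transfer {N : Finset ι} (hN : N.Nonempty) {a : ι → ℝ} {i : ι}
    (hi : i ∈ N) {ε : ℝ} (hε : 0 < ε) (hεa : ε < a i - N.inf' hN a) :
    N.inf' hN a < N.inf' hN (a + transfer N i ε) := by
  obtain ⟨j₀, hj₀, hj₀a⟩ := Finset.exists_mem_eq_inf' hN a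
  have hj₀i : j₀ ≠ i := by rintro rfl; linarith
  have hshare : 0 < ε / #(N.erase i) :=
    div_pos hε (Nat.cast_pos.mpr (Finset.card_pos.mpr ⟨j₀, Finset.mem_erase.mpr ⟨hj₀i, hj₀⟩⟩))
  rw [Finset.lt_inf'_iff]
  intro j hj
  have hle : N.inf' hN a ≤ a j := Finset.inf'_le a hj
  by_cases hji : j = i
  · subst hji
    simp only [Pi.add_apply, transfer, if_true]
    linarith
  · simp only [Pi.add_apply, transfer, hji, hj, if_true, if_false]
    linarith

end Transfer

section WaterFilling

variable {n m : ℕ} {E : ReqSeq n m} {x : Fin m → Fin n → ℝ}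

/-- The paper's `ℓ_t`: cumulative load including the allocation of `t` itself. -/
def postLoad (x : Fin m → Fin n → ℝ) (t : Fin m) : Fin n → ℝ :=
  x t + prevLoad x t

lemma Feasible.mem_of_pos (hx : Feasible E x) {t : Fin m} {i : Fin n} (hpos : 0 < x t i) :
    i ∈ E.N t := by
  by_contra hi
  exact hpos.ne' ((hx t).2.1 i hi)

lemma IsWFAlloc.postLoad_eq_nbhdMinOn (hx : IsWFAlloc E x) {t : Fin m} {i : Fin n}
    (hpos : 0 < x t i) : postLoad x t i = nbhdMinOn E t (postLoad x t) := by
  have hi := hx.1.mem_of_pos hpos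
  obtain ⟨hnn, hzero, hsum⟩ := hx.1 t
  set M := nbhdMinOn E t (postLoad x t)
  refine le_antisymm ?_ (Finset.inf'_le _ hi)
  by_contra! hlt
  have hgap : 0 < (postLoad x t i - M) / 2 := half_pos (sub_pos.mpr hlt)
  set ε := min (x t i) ((postLoad x t i - M) / 2)
  have hε : 0 < ε := lt_min hpos hgap
  have hεM : ε < postLoad x t i - M :=
    (min_le_right _ _).trans_lt (half_lt_self (sub_pos.mpr hlt))
  have hrest : ((E.N t).erase i).Nonempty := by
    obtain ⟨j₀, hj₀, hj₀M⟩ := Finset.exists_mem_eq_inf' (E.N_nonempty t) (postLoad x t)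
    exact ⟨j₀, Finset.mem_erase.mpr ⟨by rintro rfl; exact hlt.ne hj₀M, hj₀⟩⟩
  have hy : x t + transfer (E.N t) i ε ∈ allocSet n (E.N t) (E.q t) := by
    refine ⟨fun j => ?_, fun j hj => ?_, ?_⟩
    · by_cases hji : j = i
      · subst hji
        simp only [Pi.add_apply, transfer, if_true]
        linarith [min_le_left (x t j) ((postLoad x t j - M) / 2)]
      · simp only [Pi.add_apply, transfer, hji, if_false]
        split_ifs <;> have := hnn j <;> positivity
    · simp [hzero j hj, transfer_eq_zero_of_notMem hi hj]
    · simp [Finset.sum_add_distrib, hsum, sum_transfer hi hrest]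
  have hopt : nbhdMinOn E t (postLoad x t + transfer (E.N t) i ε) ≤ M := by
    convert hx.2 t _ hy using 2
    · ext j
      simp only [postLoad, Pi.add_apply]
      ring
    · rfl
  exact hopt.not_gt (inf'_lt_inf'_add_transfer (E.N_nonempty t) hi hε hεM)

lemma IsWFAlloc.height_eq_postLoad (hx : IsWFAlloc E x) {t : Fin m} {i : Fin n}
    (hpos : 0 < x t i) : height x t = postLoad x t i := by
  have hset : {c | ∃ j, 0 < x t j ∧ c = x t j + prevLoad x t j} = {postLoad x t i} := by
    ext c
    refine ⟨?_, fun hc => ⟨i, hpos, hc⟩⟩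
    rintro ⟨j, hj, rfl⟩
    exact (hx.postLoad_eq_nbhdMinOn hj).trans (hx.postLoad_eq_nbhdMinOn hpos).symm
  rw [height, hset, csSup_singleton]

lemma prevLoad_eq_sum_Iio (t : Fin m) (i : Fin n) : prevLoad x t i = ∑ r ∈ Iio t, x r i := by
  rw [prevLoad, Finset.filter_gt_eq_Iio]

lemma postLoad_eq_sum_Iic (t : Fin m) (i : Fin n) : postLoad x t i = ∑ r ∈ Iic t, x r i := by
  rw [Finset.Iic_eq_cons_Iio, Finset.sum_cons, ← prevLoad_eq_sum_Iio]
  rfl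

lemma postLoad_le_prevLoad {i : Fin n} (hnn : ∀ r, 0 ≤ x r i) {t s : Fin m} (hts : t < s) :
    postLoad x t i ≤ prevLoad x s i := by
  rw [postLoad_eq_sum_Iic, prevLoad_eq_sum_Iio]
  refine Finset.sum_le_sum_of_subset_of_nonneg (fun r hr => ?_) fun r _ _ => hnn r
  exact Finset.mem_Iio.mpr ((Finset.mem_Iic.mp hr).trans_lt hts)

end WaterFilling

/-- **Observation (Monotone Neighborhoods).** If a request sequence has no inactive edges
under its water-filling allocation, then the neighbors of each offline node arrive in
strictly increasing order of water-filling height. -/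
theorem monotone_neighborhoods (n m : ℕ) (E : ReqSeq n m)
    (x : Fin m → Fin n → ℝ) (hx : IsWFAlloc E x)
    (hactive : ∀ t, ∀ i ∈ E.N t, 0 < x t i) :
    ∀ (i : Fin n) (t s : Fin m), i ∈ E.N t → i ∈ E.N s → t < s →
      height x t < height x s := by
  intro i t s hit his hts
  calc height x t = postLoad x t i := hx.height_eq_postLoad (hactive t i hit)
    _ ≤ prevLoad x s i := postLoad_le_prevLoad (fun r => (hx.1 r).1 i) hts
    _ < postLoad x s i := lt_add_of_pos_left _ (hactive s i his)
    _ = height x s := (hx.height_eq_postLoad (hactive s i his)).symm
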